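/- arXiv:2102.11473 — 4 statements merged into one kernel-verified Lean document; each statement's English description precedes it below -/
import Mathlib

section
/- Let 0 < t < 1 and define \Upsilon_0(m) = t^{2m}(1-t^{2m+2})^2/((1-t^{4m+2})(1-t^{4m+4})) + t^{2m}(1-t^{2m})^2/((1-t^{4m})(1-t^{4m+2})) and \Upsilon_1(m) = -t^{2m+1}(1-t^{2m+2})^2/((1-t^{4m+4})\sqrt{(1-t^{4m+2})(1-t^{4m+6})}). Then the sequence c_m = (-1)^m t^{m^2} \sqrt{(1-t^{4m+2})/(1-t^2)} satisfies the recurrence c_{m+1} = (c_m(1-\Upsilon_0(m)) - c_{m-1}\Upsilon_1(m-1))/\Upsilon_1(m) for all m \ge 1. -/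
/-!
Write `q = t²`, `x = q^m` and `w m = upsilonWeight t m = (1 - q^(m+1))² / (1 - q^(2m+2))`,
which equals `(1 - q^(m+1)) / (1 + q^(m+1))`. The square roots cancel and the powers `t^(m²)`
telescope, so `c (m+1) Υ₁ m = c m · x² q w m / (1 - x² q)` and
`c (m-1) Υ₁ (m-1) = c m · w (m-1) / (1 - x² q)`, while `Υ₀ m = x (w m + w (m-1)) / (1 - x² q)`.
The recurrence thus reduces to `x (1 + x q) w m + (1 + x) w (m-1) = 1 - x² q`, which holds
because `(1 + q^(m+1)) w m = 1 - q^(m+1)` turns the left side into `x (1 - x q) + (1 - x)`.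
-/

noncomputable section

def upsilon0 (t : ℝ) (m : ℕ) : ℝ :=
  t ^ (2*m) * (1 - t ^ (2*m+2)) ^ 2 / ((1 - t ^ (4*m+2)) * (1 - t ^ (4*m+4)))
    + t ^ (2*m) * (1 - t ^ (2*m)) ^ 2 / ((1 - t ^ (4*m)) * (1 - t ^ (4*m+2)))

def upsilon1 (t : ℝ) (m : ℕ) : ℝ :=
  -(t ^ (2*m+1) * (1 - t ^ (2*m+2)) ^ 2 /
    ((1 - t ^ (4*m+4)) * Real.sqrt ((1 - t ^ (4*m+2)) * (1 - t ^ (4*m+6)))))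

def fixedVectorCoeff (t : ℝ) (m : ℕ) : ℝ :=
  (-1 : ℝ) ^ m * t ^ (m ^ 2) * Real.sqrt ((1 - t ^ (4*m+2)) / (1 - t ^ 2))

def upsilonWeight (t : ℝ) (m : ℕ) : ℝ :=
  (1 - t ^ (2*m+2)) ^ 2 / (1 - t ^ (4*m+4))

end

lemma one_add_mul_sq_div_one_sub_sq {K : Type*} [Field K] {x : K} (hx : 1 + x ≠ 0) :
    (1 + x) * ((1 - x) ^ 2 / (1 - x ^ 2)) = 1 - x := by
  rcases eq_or_ne x 1 with rfl | hx1
  · simp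
  · have hx2 : 1 - x ^ 2 ≠ 0 := by
      rw [show 1 - x ^ 2 = (1 - x) * (1 + x) by ring]
      exact mul_ne_zero (sub_ne_zero.2 hx1.symm) hx
    field_simp
    ring

lemma one_sub_pow_pos {t : ℝ} (h0 : 0 ≤ t) (h1 : t < 1) {n : ℕ} (hn : n ≠ 0) :
    0 < 1 - t ^ n :=
  sub_pos.2 (pow_lt_one₀ h0 h1 hn)

section

variable {t : ℝ}

lemma upsilonWeight_pos (h0 : 0 ≤ t) (h1 : t < 1) (m : ℕ) : 0 < upsilonWeight t m :=
  div_pos (pow_pos (one_sub_pow_pos h0 h1 (by omega)) 2) (one_sub_pow_pos h0 h1 (by omega))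

lemma one_add_pow_mul_upsilonWeight (h0 : 0 ≤ t) (m : ℕ) :
    (1 + t ^ (2*m+2)) * upsilonWeight t m = 1 - t ^ (2*m+2) := by
  rw [upsilonWeight, show t ^ (4*m+4) = (t ^ (2*m+2)) ^ 2 by ring]
  exact one_add_mul_sq_div_one_sub_sq (by positivity)

lemma pow_mul_upsilonWeight_add (h0 : 0 ≤ t) (m : ℕ) :
    t ^ (4*m+6) * upsilonWeight t (m+1)
      + t ^ (2*m+2) * (upsilonWeight t (m+1) + upsilonWeight t m) + upsilonWeight t m
      = 1 - t ^ (4*m+6) := by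
  linear_combination t ^ (2*m+2) * one_add_pow_mul_upsilonWeight h0 (m+1)
    + one_add_pow_mul_upsilonWeight h0 m

lemma upsilon0_succ (m : ℕ) :
    upsilon0 t (m+1) =
      t ^ (2*m+2) * (upsilonWeight t (m+1) + upsilonWeight t m) / (1 - t ^ (4*m+6)) := by
  simp only [upsilon0, upsilonWeight, div_eq_mul_inv, mul_inv]
  ring

lemma upsilon1_eq (h0 : 0 ≤ t) (h1 : t < 1) (m : ℕ) :
    upsilon1 t m = -(t ^ (2*m+1) * upsilonWeight t m /
      (Real.sqrt (1 - t ^ (4*m+2)) * Real.sqrt (1 - t ^ (4*m+6)))) := by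
  rw [upsilon1, upsilonWeight, Real.sqrt_mul (one_sub_pow_pos h0 h1 (by omega)).le]
  simp only [div_eq_mul_inv, mul_inv]
  ring

lemma upsilon1_neg (h0 : 0 < t) (h1 : t < 1) (m : ℕ) : upsilon1 t m < 0 := by
  rw [upsilon1_eq h0.le h1]
  exact neg_neg_of_pos <| div_pos (mul_pos (pow_pos h0 _) (upsilonWeight_pos h0.le h1 m))
    (mul_pos (Real.sqrt_pos.2 (one_sub_pow_pos h0.le h1 (by omega)))
      (Real.sqrt_pos.2 (one_sub_pow_pos h0.le h1 (by omega))))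

lemma fixedVectorCoeff_eq (h0 : 0 ≤ t) (h1 : t < 1) (m : ℕ) :
    fixedVectorCoeff t m =
      (-1) ^ m * t ^ (m ^ 2) * Real.sqrt (1 - t ^ (4*m+2)) / Real.sqrt (1 - t ^ 2) := by
  rw [fixedVectorCoeff, Real.sqrt_div' _ (one_sub_pow_pos h0 h1 two_ne_zero).le]
  ring

lemma fixedVectorCoeff_succ_mul_upsilon1 (h0 : 0 ≤ t) (h1 : t < 1) (m : ℕ) :
    fixedVectorCoeff t (m+1) * upsilon1 t m =
      fixedVectorCoeff t m * (t ^ (4*m+2) * upsilonWeight t m / (1 - t ^ (4*m+2))) := by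
  rw [fixedVectorCoeff_eq h0 h1, fixedVectorCoeff_eq h0 h1, upsilon1_eq h0 h1,
    show 4*(m+1)+2 = 4*m+6 by ring]
  have hd₀ := one_sub_pow_pos h0 h1 (n := 4*m+2) (by omega)
  have hd₁ := one_sub_pow_pos h0 h1 (n := 4*m+6) (by omega)
  have hs₀ := Real.sqrt_pos.2 hd₀
  have hs₁ := Real.sqrt_pos.2 hd₁
  have hS := Real.sqrt_pos.2 (one_sub_pow_pos h0 h1 two_ne_zero)
  field_simp
  rw [Real.sq_sqrt hd₀.le]
  ring

lemma fixedVectorCoeff_mul_upsilon1 (h0 : 0 ≤ t) (h1 : t < 1) (m : ℕ) :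
    fixedVectorCoeff t m * upsilon1 t m =
      fixedVectorCoeff t (m+1) * (upsilonWeight t m / (1 - t ^ (4*m+6))) := by
  rw [fixedVectorCoeff_eq h0 h1, fixedVectorCoeff_eq h0 h1, upsilon1_eq h0 h1,
    show 4*(m+1)+2 = 4*m+6 by ring]
  have hd₀ := one_sub_pow_pos h0 h1 (n := 4*m+2) (by omega)
  have hd₁ := one_sub_pow_pos h0 h1 (n := 4*m+6) (by omega)
  have hs₀ := Real.sqrt_pos.2 hd₀
  have hs₁ := Real.sqrt_pos.2 hd₁
  have hS := Real.sqrt_pos.2 (one_sub_pow_pos h0 h1 two_ne_zero)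
  field_simp
  rw [Real.sq_sqrt hd₁.le]
  ring

end

theorem stmt_1 (t : ℝ) (h0 : 0 < t) (h1 : t < 1)
    (Y0 Y1 c : ℕ → ℝ)
    (hY0 : ∀ m : ℕ, Y0 m =
      t ^ (2*m) * (1 - t ^ (2*m+2)) ^ 2 / ((1 - t ^ (4*m+2)) * (1 - t ^ (4*m+4)))
      + t ^ (2*m) * (1 - t ^ (2*m)) ^ 2 / ((1 - t ^ (4*m)) * (1 - t ^ (4*m+2))))
    (hY1 : ∀ m : ℕ, Y1 m =
      -(t ^ (2*m+1) * (1 - t ^ (2*m+2)) ^ 2 /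
        ((1 - t ^ (4*m+4)) * Real.sqrt ((1 - t ^ (4*m+2)) * (1 - t ^ (4*m+6))))))
    (hc : ∀ m : ℕ, c m = (-1 : ℝ) ^ m * t ^ (m ^ 2) *
      Real.sqrt ((1 - t ^ (4*m+2)) / (1 - t ^ 2))) :
    ∀ m : ℕ, 1 ≤ m → c (m+1) = (c m * (1 - Y0 m) - c (m-1) * Y1 (m-1)) / Y1 m := by
  obtain rfl : Y0 = upsilon0 t := funext hY0
  obtain rfl : Y1 = upsilon1 t := funext hY1
  obtain rfl : c = fixedVectorCoeff t := funext hc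
  rintro m hm
  obtain ⟨k, rfl⟩ := Nat.exists_eq_add_of_le' hm
  have hD : 1 - t ^ (4*k+6) ≠ 0 := (one_sub_pow_pos h0.le h1 (by omega)).ne'
  rw [Nat.add_sub_cancel, eq_div_iff (upsilon1_neg h0 h1 _).ne,
    fixedVectorCoeff_succ_mul_upsilon1 h0.le h1, fixedVectorCoeff_mul_upsilon1 h0.le h1,
    upsilon0_succ, show 4*(k+1)+2 = 4*k+6 by ring]
  field_simp
  linear_combination fixedVectorCoeff t (k+1) * pow_mul_upsilonWeight_add h0.le k
end

section
/- Let 0 < t < 1, \ell \in \frac{1}{2}\mathbb{N}, i, j \in \{-\ell,\ldots,\ell\}, and let M(\ell,i) = t^{\ell-i} \sqrt{(1-t^{2(\ell+i+1)})/(1-t^{2(2\ell+2)})}. Then for the quantity \beta^+_+(\ell,i,j) with |\beta^+_+(\ell,i,j)| = t^{j-i-1} \cdot t^{\ell-j+1} \sqrt{(1-t^{2(\ell-j+1)})(1-t^{2(\ell+i+1)})/((1-t^{2(2\ell+1)})(1-t^{2(2\ell+2)}))}, one has \max_j |\beta^+_+(\ell,i,j)| = M(\ell,i), and (4\ell+3)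 \cdot M(\ell,i) \le t^{2\ell}(4\ell+3) when \ell + i = 0, while M(\ell,i) \le 1 always. -/
/-!
Since `t ^ (j - i - 1) * t ^ (ℓ - j + 1) = t ^ (ℓ - i)`, the quantity `B j` is
`t ^ (ℓ - i) * √((1 - t ^ (2(ℓ-j+1))) / (1 - t ^ (2(2ℓ+1))) * M')`, where `M = t ^ (ℓ - i) * √M'`.
Because `x ↦ 1 - t ^ x` is increasing for `0 < t < 1`, the first ratio is at most `1`, with
equality at `j = -ℓ`; the same monotonicity gives `M' ≤ 1`, hence `M ≤ t ^ (ℓ - i) ≤ 1`.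
-/

namespace Real

variable {t x y : ℝ}

lemma one_sub_rpow_le_one_sub_rpow (h0 : 0 < t) (h1 : t ≤ 1) (hxy : x ≤ y) :
    1 - t ^ x ≤ 1 - t ^ y :=
  sub_le_sub_left (rpow_le_rpow_of_exponent_ge h0 h1 hxy) 1

lemma one_sub_rpow_pos (h0 : 0 ≤ t) (h1 : t < 1) (hx : 0 < x) : 0 < 1 - t ^ x :=
  sub_pos.2 (rpow_lt_one h0 h1 hx)

lemma one_sub_rpow_div_one_sub_rpow_nonneg (h0 : 0 ≤ t) (h1 : t < 1) (hx : 0 ≤ x) (hy : 0 < y) :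
    0 ≤ (1 - t ^ x) / (1 - t ^ y) :=
  div_nonneg (sub_nonneg.2 (rpow_le_one h0 h1.le hx)) (one_sub_rpow_pos h0 h1 hy).le

lemma one_sub_rpow_div_one_sub_rpow_le_one (h0 : 0 < t) (h1 : t < 1) (hy : 0 < y) (hxy : x ≤ y) :
    (1 - t ^ x) / (1 - t ^ y) ≤ 1 :=
  (div_le_one (one_sub_rpow_pos h0.le h1 hy)).2 (one_sub_rpow_le_one_sub_rpow h0 h1.le hxy)

end Real

open Real in
theorem stmt_10_general (t ℓ i : ℝ) (h0 : 0 < t) (h1 : t < 1)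
    (hi : ∃ a : ℕ, i = -ℓ + a) (hi' : i ≤ ℓ)
    (B : ℝ → ℝ) (M : ℝ)
    (hB : ∀ j : ℝ, B j = t ^ (j - i - 1) * t ^ (ℓ - j + 1) *
      Real.sqrt ((1 - t ^ (2*(ℓ - j + 1))) * (1 - t ^ (2*(ℓ + i + 1))) /
        ((1 - t ^ (2*(2*ℓ + 1))) * (1 - t ^ (2*(2*ℓ + 2))))))
    (hM : M = t ^ (ℓ - i) * Real.sqrt ((1 - t ^ (2*(ℓ + i + 1))) / (1 - t ^ (2*(2*ℓ + 2))))) :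
    (∀ j : ℝ, (∃ b : ℕ, j = -ℓ + b) → j ≤ ℓ → B j ≤ M) ∧
    B (-ℓ) = M ∧
    (ℓ + i = 0 → (4*ℓ + 3) * M ≤ t ^ (2*ℓ) * (4*ℓ + 3)) ∧
    M ≤ 1 := by
  have hℓi : -ℓ ≤ i := by
    obtain ⟨a, rfl⟩ := hi
    simp
  have hB' : ∀ j, B j = t ^ (ℓ - i) * √((1 - t ^ (2*(ℓ - j + 1))) / (1 - t ^ (2*(2*ℓ + 1))) *
      ((1 - t ^ (2*(ℓ + i + 1))) / (1 - t ^ (2*(2*ℓ + 2))))) := fun j => by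
    rw [hB, ← rpow_add h0, mul_div_mul_comm]
    ring_nf
  have hM' : 0 ≤ (1 - t ^ (2*(ℓ + i + 1))) / (1 - t ^ (2*(2*ℓ + 2))) :=
    one_sub_rpow_div_one_sub_rpow_nonneg h0.le h1 (by linarith) (by linarith)
  have hM_le : M ≤ t ^ (ℓ - i) :=
    hM ▸ mul_le_of_le_one_right (rpow_nonneg h0.le _)
      (sqrt_le_one.2 (one_sub_rpow_div_one_sub_rpow_le_one h0 h1 (by linarith) (by linarith)))
  refine ⟨fun j ⟨b, hb⟩ _ => ?_, ?_, fun h => ?_, hM_le.trans (rpow_le_one h0.le h1.le (by linarith))⟩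
  · have hj : -ℓ ≤ j := by simp [hb]
    rw [hB', hM]
    gcongr
    exact mul_le_of_le_one_left hM'
      (one_sub_rpow_div_one_sub_rpow_le_one h0 h1 (by linarith) (by linarith))
  · have hR := one_sub_rpow_pos h0.le h1 (x := 2*(2*ℓ + 1)) (by linarith)
    rw [hB', hM, show 2*(ℓ - -ℓ + 1) = 2*(2*ℓ + 1) by ring, div_self hR.ne', one_mul]
  · rw [show 2*ℓ = ℓ - i by linarith, mul_comm]
    exact mul_le_mul_of_nonneg_right hM_le (by linarith)

theorem stmt_10 (t ℓ i : ℝ) (h0 : 0 < t) (h1 : t < 1)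
    (hℓ : ∃ n : ℕ, 2 * ℓ = n) (hi : ∃ a : ℕ, i = -ℓ + a) (hi' : i ≤ ℓ)
    (B : ℝ → ℝ) (M : ℝ)
    (hB : ∀ j : ℝ, B j = t ^ (j - i - 1) * t ^ (ℓ - j + 1) *
      Real.sqrt ((1 - t ^ (2*(ℓ - j + 1))) * (1 - t ^ (2*(ℓ + i + 1))) /
        ((1 - t ^ (2*(2*ℓ + 1))) * (1 - t ^ (2*(2*ℓ + 2))))))
    (hM : M = t ^ (ℓ - i) * Real.sqrt ((1 - t ^ (2*(ℓ + i + 1))) / (1 - t ^ (2*(2*ℓ + 2))))) :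
    (∀ j : ℝ, (∃ b : ℕ, j = -ℓ + b) → j ≤ ℓ → B j ≤ M) ∧
    B (-ℓ) = M ∧
    (ℓ + i = 0 → (4*ℓ + 3) * M ≤ t ^ (2*ℓ) * (4*ℓ + 3)) ∧
    M ≤ 1 :=
  stmt_10_general t ℓ i h0 h1 hi hi' B M hB hM
end

section
/- Let 0 < t < 1 and let b = t^N \otimes U acting on \ell^2(\mathbb{N}) \otimes \ell^2(\mathbb{Z}), where t^N e_n = t^n e_n and U is the bilateral shift. Then b is a normal operator and the spectrum of bb* equals \{t^{2m} : m \in \mathbb{N}\} \cup \{0\}. -/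
/-!
`b` sends the basis vector `e (n, k)` to `t ^ n • e (n, k + 1)`: it permutes the standard basis
of `ℓ²(ℕ × ℤ)` up to weights that the permutation preserves, so `b⋆ b` and `b b⋆` are both the
diagonal operator with entries `t ^ (2 n)`. A diagonal operator with entries `d` has spectrum the
closure of the range of `d`: every `d i` is an eigenvalue and the spectrum is closed, while off
that closure the entries `(μ - d i)⁻¹` are bounded and so define the inverse of `μ - T` as another
diagonal operator. Since `t ^ (2 m) → 0`, taking the closure of `{t ^ (2 m)}` only adds `0`.
-/

open Filter Topology
open scoped ENNReal ComplexConjugate InnerProductSpace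

theorem Filter.Tendsto.closure_range_eq_insert {X : Type*} [TopologicalSpace X] [T2Space X]
    {u : ℕ → X} {x : X} (hu : Tendsto u atTop (𝓝 x)) :
    closure (Set.range u) = insert x (Set.range u) :=
  subset_antisymm
    (closure_minimal (Set.subset_insert _ _) hu.isCompact_insert_range.isClosed) <|
    Set.insert_subset (mem_closure_of_tendsto hu (Eventually.of_forall Set.mem_range_self))
      subset_closure

namespace lp

variable {𝕜 : Type*} {ι : Type*} {p : ℝ≥0∞}

section NormedField

variable [NormedField 𝕜]

theorem norm_mul_apply_le (c : lp (fun _ : ι => 𝕜) ∞) (x : ι → 𝕜) (i : ι) :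
    ‖c i * x i‖ ≤ ‖c‖ * ‖x i‖ :=
  (norm_mul_le _ _).trans (by gcongr; exact norm_apply_le_norm ENNReal.top_ne_zero c i)

theorem memℓp_mul_infty (c : lp (fun _ : ι => 𝕜) ∞) (x : lp (fun _ : ι => 𝕜) p) :
    Memℓp (fun i => c i * x i) p :=
  ((lp.memℓp x).norm.const_mul ‖c‖).mono fun i => norm_mul_apply_le c x i

theorem single_one_ne_zero [DecidableEq ι] (i : ι) :
    lp.single (E := fun _ : ι => 𝕜) p i 1 ≠ 0 := fun h => by
  simpa using congr($h i)

variable [Fact (1 ≤ p)]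

theorem ext_single_one [DecidableEq ι] (hp : p ≠ ⊤) {F : Type*} [AddCommMonoid F]
    [Module 𝕜 F] [TopologicalSpace F] [T2Space F] {f g : lp (fun _ : ι => 𝕜) p →L[𝕜] F}
    (h : ∀ i, f (lp.single p i 1) = g (lp.single p i 1)) : f = g :=
  ext_continuousLinearMap hp fun i => ContinuousLinearMap.ext_ring (h i)

variable (p) in
noncomputable def diagonal (c : lp (fun _ : ι => 𝕜) ∞) :
    lp (fun _ : ι => 𝕜) p →L[𝕜] lp (fun _ : ι => 𝕜) p :=
  LinearMap.mkContinuous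
    { toFun := fun x => ⟨fun i => c i * x i, memℓp_mul_infty c x⟩
      map_add' := fun x y => lp.ext <| funext fun i => mul_add (c i) (x i) (y i)
      map_smul' := fun r x => lp.ext <| funext fun i => mul_left_comm (c i) r (x i) }
    ‖c‖ fun x => calc
      _ ≤ ‖‖c‖ • toNorm x‖ := norm_mono (zero_lt_one.trans_le Fact.out).ne' fun i => by
        rw [coeFn_smul, Pi.smul_apply, toNorm_coe, smul_eq_mul, Real.norm_of_nonneg
          (by positivity)]
        exact norm_mul_apply_le c x i
      _ = ‖c‖ * ‖x‖ := by rw [norm_smul, norm_norm, norm_toNorm]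

theorem diagonal_apply (c : lp (fun _ : ι => 𝕜) ∞) (x : lp (fun _ : ι => 𝕜) p) (i : ι) :
    diagonal p c x i = c i * x i := rfl

theorem diagonal_single [DecidableEq ι] (c : lp (fun _ : ι => 𝕜) ∞) (i : ι) (a : 𝕜) :
    diagonal p c (lp.single p i a) = c i • lp.single p i a := by
  ext j
  rw [diagonal_apply, coeFn_smul, Pi.smul_apply, lp.single_apply, Pi.single_apply]
  split_ifs with h <;> simp [h]

end NormedField

section Spectrum

variable [NontriviallyNormedField 𝕜] [DecidableEq ι] [Fact (1 ≤ p)]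
  {T : lp (fun _ : ι => 𝕜) p →L[𝕜] lp (fun _ : ι => 𝕜) p} {d : ι → 𝕜}

theorem mem_spectrum_of_apply_single [CompleteSpace 𝕜]
    (hT : ∀ i, T (lp.single p i 1) = d i • lp.single p i 1) (i : ι) : d i ∈ spectrum 𝕜 T := by
  rw [ContinuousLinearMap.spectrum_eq]
  exact Module.End.HasEigenvalue.mem_spectrum <| Module.End.hasEigenvalue_of_hasEigenvector
    ⟨Module.End.mem_eigenspace_iff.2 (hT i), single_one_ne_zero i⟩

theorem notMem_spectrum_of_apply_single (hp : p ≠ ⊤)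
    (hT : ∀ i, T (lp.single p i 1) = d i • lp.single p i 1) {μ : 𝕜} {ε : ℝ} (hε : 0 < ε)
    (hμ : ∀ i, ε ≤ ‖μ - d i‖) : μ ∉ spectrum 𝕜 T := by
  have hne (i : ι) : μ - d i ≠ 0 := norm_pos_iff.1 (hε.trans_le (hμ i))
  let c : lp (fun _ : ι => 𝕜) ∞ := ⟨fun i => (μ - d i)⁻¹, memℓp_infty ⟨ε⁻¹, by
    rintro _ ⟨i, rfl⟩
    simpa using inv_anti₀ hε (hμ i)⟩⟩
  have hres (i : ι) :
      (algebraMap 𝕜 _ μ - T) (lp.single p i 1) = (μ - d i) • lp.single p i 1 := by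
    rw [sub_apply, Algebra.algebraMap_eq_smul_one, smul_apply, one_apply_eq_self, hT, sub_smul]
  rw [spectrum.notMem_iff]
  refine ⟨⟨_, diagonal p c, ext_single_one hp fun i => ?_, ext_single_one hp fun i => ?_⟩,
    rfl⟩
  · rw [mul_apply_eq_comp, diagonal_single, map_smul, hres, smul_smul]
    simp [c, hne i]
  · rw [mul_apply_eq_comp, hres, map_smul, diagonal_single, smul_smul]
    simp [c, hne i]

theorem spectrum_eq_closure_range_of_apply_single [CompleteSpace 𝕜] (hp : p ≠ ⊤)
    (hT : ∀ i, T (lp.single p i 1) = d i • lp.single p i 1) :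
    spectrum 𝕜 T = closure (Set.range d) := by
  refine subset_antisymm (fun μ hμ => ?_) <| closure_minimal
    (Set.range_subset_iff.2 (mem_spectrum_of_apply_single hT)) (spectrum.isClosed T)
  by_contra hμd
  obtain ⟨ε, hε, hfar⟩ : ∃ ε > 0, ∀ i, ε ≤ ‖μ - d i‖ := by
    simpa [Metric.mem_closure_iff, dist_eq_norm] using hμd
  exact notMem_spectrum_of_apply_single hp hT hε hfar hμ

end Spectrum

section WeightedPermutation

variable [RCLike 𝕜] [DecidableEq ι]
  {b : lp (fun _ : ι => 𝕜) 2 →L[𝕜] lp (fun _ : ι => 𝕜) 2} {σ : ι ≃ ι} {w : ι → 𝕜}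

theorem apply_eq_inner_single (x : lp (fun _ : ι => 𝕜) 2) (i : ι) :
    x i = ⟪lp.single 2 i 1, x⟫_𝕜 := by
  simp [inner_single_left]

theorem star_apply_single_of_apply_single
    (hb : ∀ i, b (lp.single 2 i 1) = w i • lp.single 2 (σ i) 1) (j : ι) :
    star b (lp.single 2 j 1) = conj (w (σ.symm j)) • lp.single 2 (σ.symm j) 1 := by
  ext i
  rw [apply_eq_inner_single, ContinuousLinearMap.star_eq_adjoint,
    ContinuousLinearMap.adjoint_inner_right, hb, inner_smul_left, inner_single_left,
    coeFn_smul, Pi.smul_apply, lp.single_apply, lp.single_apply, Pi.single_apply,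
    Pi.single_apply]
  by_cases h : σ i = j
  · subst h
    simp
  · simp [h, Equiv.eq_symm_apply]

theorem star_mul_self_apply_single
    (hb : ∀ i, b (lp.single 2 i 1) = w i • lp.single 2 (σ i) 1) (i : ι) :
    (star b * b) (lp.single 2 i 1) = (conj (w i) * w i) • lp.single 2 i 1 := by
  rw [mul_apply_eq_comp, hb, map_smul, star_apply_single_of_apply_single hb,
    Equiv.symm_apply_apply, smul_smul, mul_comm]

theorem mul_star_self_apply_single
    (hb : ∀ i, b (lp.single 2 i 1) = w i • lp.single 2 (σ i) 1) (j : ι) :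
    (b * star b) (lp.single 2 j 1) =
      (conj (w (σ.symm j)) * w (σ.symm j)) • lp.single 2 j 1 := by
  rw [mul_apply_eq_comp, star_apply_single_of_apply_single hb, map_smul, hb,
    Equiv.apply_symm_apply, smul_smul]

theorem isStarNormal_of_apply_single
    (hb : ∀ i, b (lp.single 2 i 1) = w i • lp.single 2 (σ i) 1) (hw : ∀ i, ‖w (σ i)‖ = ‖w i‖) :
    IsStarNormal b :=
  ⟨ext_single_one ENNReal.ofNat_ne_top fun j => by
    rw [star_mul_self_apply_single hb, mul_star_self_apply_single hb, RCLike.conj_mul,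
      RCLike.conj_mul, ← hw (σ.symm j), Equiv.apply_symm_apply]⟩

end WeightedPermutation

end lp

theorem stmt_15 (t : ℝ) (h0 : 0 < t) (h1 : t < 1)
    (b : lp (fun _ : ℕ × ℤ => ℂ) 2 →L[ℂ] lp (fun _ : ℕ × ℤ => ℂ) 2)
    (hb : ∀ (n : ℕ) (k : ℤ), b (lp.single 2 (n, k) 1) =
      ((t : ℂ) ^ n) • lp.single 2 (n, k + 1) 1) :
    IsStarNormal b ∧
    spectrum ℂ (b * star b) = {x : ℂ | ∃ m : ℕ, x = ((t : ℂ)) ^ (2*m)} ∪ {0} := by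
  let σ : ℕ × ℤ ≃ ℕ × ℤ := (Equiv.refl ℕ).prodCongr (Equiv.addRight 1)
  have hbσ (i : ℕ × ℤ) : b (lp.single 2 i 1) = (t : ℂ) ^ i.1 • lp.single 2 (σ i) 1 := by
    obtain ⟨n, k⟩ := i
    exact hb n k
  refine ⟨lp.isStarNormal_of_apply_single hbσ fun i => rfl, ?_⟩
  have hbb (j : ℕ × ℤ) :
      (b * star b) (lp.single 2 j 1) = (t : ℂ) ^ (2 * j.1) • lp.single 2 j 1 := by
    rw [lp.mul_star_self_apply_single hbσ, map_pow, Complex.conj_ofReal, ← pow_add, two_mul]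
    rfl
  have htendsto : Tendsto (fun m : ℕ => (t : ℂ) ^ (2 * m)) atTop (𝓝 0) := by
    simp_rw [pow_mul]
    refine tendsto_pow_atTop_nhds_zero_of_norm_lt_one ?_
    rw [norm_pow, Complex.norm_real, Real.norm_of_nonneg h0.le]
    nlinarith
  have hrange : Set.range (fun j : ℕ × ℤ => (t : ℂ) ^ (2 * j.1)) =
      Set.range fun m : ℕ => (t : ℂ) ^ (2 * m) :=
    Prod.fst_surjective.range_comp fun m : ℕ => (t : ℂ) ^ (2 * m)
  rw [lp.spectrum_eq_closure_range_of_apply_single ENNReal.ofNat_ne_top hbb, hrange,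
    htendsto.closure_range_eq_insert, Set.union_singleton]
  simp_rw [Set.range, eq_comm]
end

section
/- Define a directed graph on \Gamma = \{(\gamma_1,\gamma_2,\gamma_3) : \gamma_1 \in \frac{1}{2}\mathbb{N}, \gamma_2 \in \mathbb{Z}, \gamma_3 \in \{-\gamma_1,-\gamma_1+1,\ldots,\gamma_1\}\} with edges \gamma \to \gamma + (0,1,0), \gamma \to \gamma - (0,1,0), \gamma \to \gamma + (1/2,0,-1/2) (for all \gamma), and \gamma \to \gamma + (1/2,0,1/2) whenever \gamma_3 = \gamma_1. Then for every \gamma \in \Gamma there is a directed path from (0,0,0) to \gamma of length at most 2\gamma_1 + |\gamma_2|. -/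
/-- `Γ` is encoded as triples `(L, g₂, a) : ℕ × ℤ × ℕ` with `a ≤ L`, representing
`γ₁ = L/2`, `γ₂ = g₂`, `γ₃ = -L/2 + a`.  The four edge types correspond to
`γ + (0,1,0)`, `γ - (0,1,0)`, `γ + (1/2,0,-1/2)` and (when `γ₃ = γ₁`, i.e. `a = L`)
`γ + (1/2,0,1/2)`. -/
theorem stmt_17
    (E : ℕ × ℤ × ℕ → ℕ × ℤ × ℕ → Prop)
    (hE : ∀ x y, E x y ↔
      (y = (x.1, x.2.1 + 1, x.2.2) ∨ y = (x.1, x.2.1 - 1, x.2.2) ∨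
       y = (x.1 + 1, x.2.1, x.2.2) ∨ (x.2.2 = x.1 ∧ y = (x.1 + 1, x.2.1, x.2.2 + 1)))) :
    ∀ (L : ℕ) (g2 : ℤ) (a : ℕ), a ≤ L →
      ∃ (n : ℕ) (f : ℕ → ℕ × ℤ × ℕ), n ≤ L + g2.natAbs ∧
        f 0 = (0, 0, 0) ∧ f n = (L, g2, a) ∧ ∀ m < n, E (f m) (f (m+1)) := by
  intro L g2 a ha
  -- Path predicate: a path from the origin of length n ending at x.
  have step : ∀ (x y : ℕ × ℤ × ℕ) (n : ℕ),
      (∃ f : ℕ → ℕ × ℤ × ℕ, f 0 = (0,0,0) ∧ f n = x ∧ ∀ m < n, E (f m) (f (m+1))) →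
      E x y →
      ∃ g : ℕ → ℕ × ℤ × ℕ, g 0 = (0,0,0) ∧ g (n+1) = y ∧ ∀ m < n+1, E (g m) (g (m+1)) := by
    intro x y n ⟨f, h0, hn, hf⟩ hxy
    refine ⟨Function.update f (n+1) y, ?_, ?_, ?_⟩
    · rw [Function.update_of_ne (by omega)]; exact h0
    · rw [Function.update_self]
    · intro m hm
      rcases Nat.lt_or_ge m n with h | h
      · rw [Function.update_of_ne (by omega), Function.update_of_ne (by omega)]
        exact hf m h
      · have hmn : m = n := by omega
        subst hmn
        rw [Function.update_of_ne (by omega), Function.update_self, hn]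
        exact hxy
  -- reach (k,0,k) in k steps
  have h1 : ∀ k : ℕ, ∃ f : ℕ → ℕ × ℤ × ℕ,
      f 0 = (0,0,0) ∧ f k = (k, 0, k) ∧ ∀ m < k, E (f m) (f (m+1)) := by
    intro k
    induction k with
    | zero => exact ⟨fun _ => (0,0,0), rfl, rfl, fun m hm => absurd hm (by omega)⟩
    | succ k ih =>
      apply step (k, 0, k) _ k ih
      rw [hE]
      exact Or.inr (Or.inr (Or.inr ⟨rfl, rfl⟩))
  -- reach (a+d, 0, a) in a+d steps
  have h2 : ∀ d : ℕ, ∃ f : ℕ → ℕ × ℤ × ℕ,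
      f 0 = (0,0,0) ∧ f (a + d) = (a + d, 0, a) ∧ ∀ m < a + d, E (f m) (f (m+1)) := by
    intro d
    induction d with
    | zero => simpa using h1 a
    | succ d ih =>
      have := step (a + d, 0, a) (a + d + 1, 0, a) (a + d) ih
        (by rw [hE]; exact Or.inr (Or.inr (Or.inl rfl)))
      exact this
  obtain ⟨dL, hdL⟩ : ∃ d, L = a + d := ⟨L - a, by omega⟩
  subst hdL
  -- now add g2 steps
  have hpos : ∀ j : ℕ, ∃ f : ℕ → ℕ × ℤ × ℕ,
      f 0 = (0,0,0) ∧ f (a + dL + j) = (a + dL, (j : ℤ), a) ∧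
        ∀ m < a + dL + j, E (f m) (f (m+1)) := by
    intro j
    induction j with
    | zero => simpa using h2 dL
    | succ j ih =>
      have := step (a + dL, (j : ℤ), a) (a + dL, (j : ℤ) + 1, a) (a + dL + j) ih
        (by rw [hE]; exact Or.inl rfl)
      have e : ((j + 1 : ℕ) : ℤ) = (j : ℤ) + 1 := by push_cast; ring
      rw [e]
      exact this
  have hneg : ∀ j : ℕ, ∃ f : ℕ → ℕ × ℤ × ℕ,
      f 0 = (0,0,0) ∧ f (a + dL + j) = (a + dL, -(j : ℤ), a) ∧
        ∀ m < a + dL + j, E (f m) (f (m+1)) := by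
    intro j
    induction j with
    | zero => simpa using h2 dL
    | succ j ih =>
      have := step (a + dL, -(j : ℤ), a) (a + dL, -(j : ℤ) - 1, a) (a + dL + j) ih
        (by rw [hE]; exact Or.inr (Or.inl rfl))
      have e : -((j + 1 : ℕ) : ℤ) = -(j : ℤ) - 1 := by push_cast; ring
      rw [e]
      exact this
  rcases Int.le_total 0 g2 with hg | hg
  · obtain ⟨f, hf0, hfn, hfe⟩ := hpos g2.natAbs
    refine ⟨a + dL + g2.natAbs, f, le_refl _, hf0, ?_, hfe⟩
    rw [hfn, Int.natAbs_of_nonneg hg]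
  · obtain ⟨f, hf0, hfn, hfe⟩ := hneg g2.natAbs
    refine ⟨a + dL + g2.natAbs, f, le_refl _, hf0, ?_, hfe⟩
    rw [hfn]
    congr 1
    congr 1
    omega
end
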